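/- arXiv:physics/0703159 — 5 statements merged into one kernel-verified Lean document; each statement's English description precedes it below -/
import Mathlib

section
/- Conversely, if there exist positive functions μ_{αβ} : {0,1} → ℝ_{>0} such that ψ_{αβ}(s,t) = [p̂_{αβ}(s,t)/(p̂_α(s) p̂_β(t))] μ_{αβ}(t) μ_{βα}(s) and φ_α(s) = p̂_α(s)/∏_{β∈N(α)} μ_{βα}(s), then m_{α→β} := μ_{αβ} is a fixed point of the BP update equations, and the corresponding beliefs satisfy b_{αβ} = p̂_{αβ} and b_α = p̂_α. -/
open Finset

def graphOf {V : Type*} (E : Finset (V × V)) : SimpleGraph V where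
  Adj a b := a ≠ b ∧ ((a, b) ∈ E ∨ (b, a) ∈ E)
  symm := ⟨fun _ _ h => ⟨h.1.symm, h.2.symm⟩⟩
  loopless := ⟨fun _ h => h.1 rfl⟩

instance {V : Type*} [DecidableEq V] (E : Finset (V × V)) :
    DecidableRel (graphOf E).Adj := fun a b =>
  inferInstanceAs (Decidable (a ≠ b ∧ ((a, b) ∈ E ∨ (b, a) ∈ E)))

def nbhd {V : Type*} [Fintype V] [DecidableEq V] (E : Finset (V × V)) (α : V) : Finset V :=
  (graphOf E).neighborFinset α

section BP

variable {V : Type*} [Fintype V] [DecidableEq V]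

/-- The product of incoming messages at `α` except the one from `β`. -/
def nmsg (E : Finset (V × V)) (m : V → V → Bool → ℝ) (α β : V) (s : Bool) : ℝ :=
  ∏ γ ∈ nbhd E α \ {β}, m γ α s

/-- Unnormalized single-vertex belief. -/
def ubel1 (E : Finset (V × V)) (φ : V → Bool → ℝ) (m : V → V → Bool → ℝ)
    (α : V) (s : Bool) : ℝ :=
  φ α s * ∏ β ∈ nbhd E α, m β α s

/-- Normalized single-vertex belief. -/
noncomputable def bel1 (E : Finset (V × V)) (φ : V → Bool → ℝ) (m : V → V → Bool → ℝ)
    (α : V) (s : Bool) : ℝ :=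
  ubel1 E φ m α s / ∑ s' : Bool, ubel1 E φ m α s'

/-- Unnormalized pairwise belief. -/
def ubel2 (E : Finset (V × V)) (φ : V → Bool → ℝ) (ψ : V → V → Bool → Bool → ℝ)
    (m : V → V → Bool → ℝ) (α β : V) (s t : Bool) : ℝ :=
  nmsg E m α β s * nmsg E m β α t * φ α s * φ β t * ψ α β s t

/-- Normalized pairwise belief. -/
noncomputable def bel2 (E : Finset (V × V)) (φ : V → Bool → ℝ) (ψ : V → V → Bool → Bool → ℝ)
    (m : V → V → Bool → ℝ) (α β : V) (s t : Bool) : ℝ :=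
  ubel2 E φ ψ m α β s t / ∑ s' : Bool, ∑ t' : Bool, ubel2 E φ ψ m α β s' t'

end BP


/-- conversely, if `ψ_{αβ}(s,t) = p̂_{αβ}(s,t)/(p̂_α(s)p̂_β(t)) μ_{αβ}(t) μ_{βα}(s)`
and `φ_α(s) = p̂_α(s)/∏_{β∈N(α)} μ_{βα}(s)` for some positive functions `μ`, then
`m := μ` is a BP fixed point whose (normalized) beliefs are `p̂_α` and `p̂_{αβ}`. -/
theorem mu_gives_fixed_point_with_beliefs_phat
    {V : Type*} [Fintype V] [DecidableEq V] (E : Finset (V × V))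
    (phat1 : V → Bool → ℝ) (phat2 : V → V → Bool → Bool → ℝ)
    (hpos1 : ∀ α s, 0 < phat1 α s) (hpos2 : ∀ α β s t, 0 < phat2 α β s t)
    (hnorm1 : ∀ α, ∑ s : Bool, phat1 α s = 1)
    (hsym : ∀ α β s t, phat2 α β s t = phat2 β α t s)
    (hcons : ∀ α β, (graphOf E).Adj α β → ∀ t : Bool,
      ∑ s : Bool, phat2 α β s t = phat1 β t)
    (μ : V → V → Bool → ℝ) (hμ : ∀ α β t, 0 < μ α β t)
    (φ : V → Bool → ℝ) (ψ : V → V → Bool → Bool → ℝ)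
    (hφ : ∀ α s, φ α s = phat1 α s / ∏ β ∈ nbhd E α, μ β α s)
    (hψ : ∀ α β s t,
      ψ α β s t = phat2 α β s t / (phat1 α s * phat1 β t) * (μ α β t * μ β α s)) :
    (∀ α β, (graphOf E).Adj α β → ∀ t : Bool,
      μ α β t = ∑ s : Bool, nmsg E μ α β s * φ α s * ψ α β s t) ∧
    (∀ α s, bel1 E φ μ α s = phat1 α s) ∧
    (∀ α β, (graphOf E).Adj α β → ∀ s t : Bool,
      bel2 E φ ψ μ α β s t = phat2 α β s t) := by
  have hμne : ∀ α β t, μ α β t ≠ 0 := fun α β t => (hμ α β t).ne'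
  have hp1ne : ∀ α s, phat1 α s ≠ 0 := fun α s => (hpos1 α s).ne'
  have hnmsgpos : ∀ α β s, 0 < nmsg E μ α β s := fun α β s =>
    Finset.prod_pos (fun γ _ => hμ γ α s)
  have hsplit : ∀ α β s, β ∈ nbhd E α →
      (∏ γ ∈ nbhd E α, μ γ α s) = μ β α s * nmsg E μ α β s := by
    intro α β s hmem
    rw [nmsg, Finset.sdiff_singleton_eq_erase]
    exact (Finset.mul_prod_erase _ (fun γ => μ γ α s) hmem).symm
  have hkey : ∀ α β s, β ∈ nbhd E α →
      nmsg E μ α β s * φ α s = phat1 α s / μ β α s := by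
    intro α β s h
    rw [hφ, hsplit α β s h]
    have h1 := hμne β α s
    have h2 := (hnmsgpos α β s).ne'
    field_simp
  have hmem : ∀ α β, (graphOf E).Adj α β → β ∈ nbhd E α := by
    intro α β hadj
    simpa [nbhd, SimpleGraph.mem_neighborFinset] using hadj
  refine ⟨?_, ?_, ?_⟩
  · intro α β hadj t
    have hm := hmem α β hadj
    have hstep : ∀ s : Bool, nmsg E μ α β s * φ α s * ψ α β s t
        = phat2 α β s t * (μ α β t / phat1 β t) := by
      intro s
      rw [hψ, mul_comm (nmsg E μ α β s) (φ α s), mul_comm (φ α s) (nmsg E μ α β s),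
        hkey α β s hm]
      have := hp1ne α s
      have := hp1ne β t
      have := hμne β α s
      field_simp
    simp only [hstep]
    rw [← Finset.sum_mul, hcons α β hadj t, mul_comm,
      div_mul_cancel₀ _ (hp1ne β t)]
  · intro α s
    have hub1 : ∀ s, ubel1 E φ μ α s = phat1 α s := by
      intro s
      rw [ubel1, hφ]
      have : (∏ β ∈ nbhd E α, μ β α s) ≠ 0 :=
        (Finset.prod_pos (fun γ _ => hμ γ α s)).ne'
      field_simp
    rw [bel1]
    simp only [hub1]
    rw [hnorm1, div_one]
  · intro α β hadj s t
    have hmβ := hmem α β hadj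
    have hmα := hmem β α hadj.symm
    have hub2 : ∀ s t, ubel2 E φ ψ μ α β s t = phat2 α β s t := by
      intro s t
      have h1 := hkey α β s hmβ
      have h2 := hkey β α t hmα
      rw [ubel2, hψ]
      have e : nmsg E μ α β s * nmsg E μ β α t * φ α s * φ β t
          = (nmsg E μ α β s * φ α s) * (nmsg E μ β α t * φ β t) := by ring
      rw [e, h1, h2]
      have := hp1ne α s
      have := hp1ne β t
      have := hμne β α s
      have := hμne α β t
      field_simp
    rw [bel2]
    simp only [hub2]
    have hsum : ∀ t' : Bool, ∑ s' : Bool, phat2 α β s' t' = phat1 β t' :=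
      hcons α β hadj
    rw [Finset.sum_comm]
    simp only [hsum]
    rw [hnorm1, div_one]
end

section
/- For a normalized BP fixed point on a finite tree (connected acyclic graph), the system log c_{αβ} − Σ_{γ∈N(α)\{β}} log c_{γα} = log K_{αβ} has a unique solution c in positive reals for any given positive constants K_{αβ}; i.e., the linear map v ↦ (v_{αβ} − Σ_{γ∈N(α)\{β}} v_{γα}) on ℝ^{oriented edges} is invertible when G is a tree. -/
open Finset

section Aux

open SimpleGraph

variable {V : Type*} [Fintype V] [DecidableEq V] {G : SimpleGraph V} [DecidableRel G.Adj]

set_option linter.unusedSectionVars false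

lemma exists_shortest_path (hc : G.Connected) (u v : V) :
    ∃ p : G.Walk u v, p.IsPath ∧ p.length = G.dist u v := by
  obtain ⟨p, hp⟩ := hc.exists_walk_length_eq_dist u v
  exact ⟨p.bypass, p.bypass_isPath,
    le_antisymm (le_trans p.length_bypass_le hp.le) (SimpleGraph.dist_le _)⟩

lemma mem_support_shortest_lt (hc : G.Connected) {u v w : V} {p : G.Walk u v}
    (hlen : p.length = G.dist u v) (hw : w ∈ p.support) (hne : u ≠ w) :
    G.dist w v < G.dist u v := by
  have h1 : G.dist u w ≤ (p.takeUntil w hw).length := SimpleGraph.dist_le _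
  have h2 : G.dist w v ≤ (p.dropUntil w hw).length := SimpleGraph.dist_le _
  have h3 : (p.takeUntil w hw).length + (p.dropUntil w hw).length = p.length := by
    rw [← SimpleGraph.Walk.length_append, p.take_spec hw]
  have h4 : 0 < G.dist u w := hc.pos_dist_of_ne hne
  omega

lemma dist_ne_of_adj (hG : G.IsTree) {α β : V} (h : G.Adj α β) (x : V) :
    G.dist α x ≠ G.dist β x := by
  have hc := hG.isConnected
  intro heq
  obtain ⟨p, hp, hpl⟩ := exists_shortest_path hc α x
  obtain ⟨q, hq, hql⟩ := exists_shortest_path hc β x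
  have hβp : β ∉ p.support := by
    intro hmem
    have := mem_support_shortest_lt hc hpl hmem h.ne
    omega
  have e := (hG.existsUnique_path β x).unique (hp.cons hβp (h := h.symm)) hq
  have : (SimpleGraph.Walk.cons h.symm p).length = q.length := by rw [e]
  rw [SimpleGraph.Walk.length_cons] at this
  omega

lemma not_two_parents (hG : G.IsTree) {α β γ x : V} (hγ : G.Adj α γ) (hβ : G.Adj α β)
    (hne : γ ≠ β) (h1 : G.dist γ x + 1 = G.dist α x) (h2 : G.dist β x + 1 = G.dist α x) :
    False := by
  have hc := hG.isConnected
  obtain ⟨p, hp, hpl⟩ := exists_shortest_path hc γ x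
  obtain ⟨q, hq, hql⟩ := exists_shortest_path hc β x
  have hαp : α ∉ p.support := by
    intro hmem
    have := mem_support_shortest_lt hc hpl hmem hγ.ne'
    omega
  have hαq : α ∉ q.support := by
    intro hmem
    have := mem_support_shortest_lt hc hql hmem hβ.ne'
    omega
  have e := (hG.existsUnique_path α x).unique (hp.cons hαp (h := hγ)) (hq.cons hαq (h := hβ))
  have : γ = β := by
    have h1 := congrArg (fun w : G.Walk α x => w.getVert 1) e
    simpa using h1
  exact hne this

lemma adj_dist_le (hc : G.Connected) {α γ : V} (h : G.Adj α γ) (x : V) :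
    G.dist α x ≤ G.dist γ x + 1 := by
  have ht : G.dist α x ≤ G.dist α γ + G.dist γ x := hc.dist_triangle
  have h1 : G.dist α γ ≤ 1 := by
    have := SimpleGraph.dist_le (SimpleGraph.Walk.cons h SimpleGraph.Walk.nil)
    simpa using this
  omega

lemma measure_lt (hG : G.IsTree) {α β γ : V} (hab : G.Adj α β) (hga : G.Adj γ α)
    (hne : γ ≠ β) :
    (univ.filter fun x => G.dist γ x < G.dist α x).card <
      (univ.filter fun x => G.dist α x < G.dist β x).card := by
  classical
  have hc := hG.isConnected
  apply Finset.card_lt_card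
  constructor
  · intro x hx
    simp only [mem_filter, mem_univ, true_and] at hx ⊢
    have e1 : G.dist α x = G.dist γ x + 1 := by
      have := adj_dist_le hc hga.symm x
      omega
    rcases lt_trichotomy (G.dist α x) (G.dist β x) with h | h | h
    · exact h
    · exact absurd h (dist_ne_of_adj hG hab x)
    · exfalso
      have e2 : G.dist α x = G.dist β x + 1 := by
        have := adj_dist_le hc hab x
        omega
      exact not_two_parents hG hga.symm hab hne e1.symm e2.symm
  · intro hsub
    have hα : α ∈ univ.filter fun x => G.dist α x < G.dist β x := by
      simp only [mem_filter, mem_univ, true_and]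
      have h0 : G.dist α α = 0 := SimpleGraph.dist_self
      have : 0 < G.dist β α := hc.pos_dist_of_ne hab.ne'
      rw [h0, SimpleGraph.dist_comm] at *
      omega
    have := hsub hα
    simp only [mem_filter, mem_univ, true_and, SimpleGraph.dist_self] at this
    omega

lemma kernel_zero (hG : G.IsTree) (v : V → V → ℝ)
    (hv : ∀ α β, G.Adj α β → v α β = ∑ γ ∈ G.neighborFinset α \ {β}, v γ α) :
    ∀ α β, G.Adj α β → v α β = 0 := by
  classical
  have key : ∀ n (α β : V), G.Adj α β →
      (univ.filter fun x => G.dist α x < G.dist β x).card ≤ n → v α β = 0 := by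
    intro n
    induction n with
    | zero =>
      intro α β hab hle
      exfalso
      have hα : α ∈ univ.filter fun x => G.dist α x < G.dist β x := by
        simp only [mem_filter, mem_univ, true_and, SimpleGraph.dist_self]
        exact hG.isConnected.pos_dist_of_ne hab.ne'
      have := Finset.card_pos.mpr ⟨α, hα⟩
      omega
    | succ n ih =>
      intro α β hab hle
      rw [hv α β hab]
      apply Finset.sum_eq_zero
      intro γ hγ
      rw [Finset.mem_sdiff, SimpleGraph.mem_neighborFinset, Finset.mem_singleton] at hγ
      have hlt := measure_lt hG hab hγ.1.symm hγ.2
      exact ih γ α hγ.1.symm (by omega)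
  intro α β hab
  exact key _ α β hab le_rfl

end Aux

noncomputable def Lmap {V : Type*} [Fintype V] [DecidableEq V] (E : Finset (V × V)) :
    (V → V → ℝ) →ₗ[ℝ] (V → V → ℝ) where
  toFun v := fun α β =>
    if (graphOf E).Adj α β then v α β - ∑ γ ∈ nbhd E α \ {β}, v γ α else v α β
  map_add' u v := by
    funext α β
    by_cases h : (graphOf E).Adj α β <;>
      simp [h, Finset.sum_add_distrib] <;> ring
  map_smul' c v := by
    funext α β
    by_cases h : (graphOf E).Adj α β <;>
      simp [h, Finset.mul_sum, mul_sub]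

lemma Lmap_injective {V : Type*} [Fintype V] [DecidableEq V] (E : Finset (V × V))
    (htree : (graphOf E).IsTree) : Function.Injective (Lmap E) := by
  rw [← LinearMap.ker_eq_bot, LinearMap.ker_eq_bot']
  intro v hv
  have hz : ∀ α β, (graphOf E).Adj α β → v α β = 0 := by
    apply kernel_zero htree
    intro α β hab
    have := congrFun (congrFun hv α) β
    simp only [Lmap, LinearMap.coe_mk, AddHom.coe_mk, hab, if_true, Pi.zero_apply] at this
    have : v α β - ∑ γ ∈ nbhd E α \ {β}, v γ α = 0 := this
    unfold nbhd at this
    linarith [this]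
  funext α β
  by_cases h : (graphOf E).Adj α β
  · exact hz α β h
  · have := congrFun (congrFun hv α) β
    simpa [Lmap, h] using this

/-- on a finite tree, for any positive constants `K_{αβ}` on oriented
edges the system `log c_{αβ} − Σ_{γ∈N(α)\{β}} log c_{γα} = log K_{αβ}` has a unique
positive solution `c` (normalized to `1` off the edges); equivalently, the linear map
`v ↦ (v_{αβ} − Σ_{γ∈N(α)\{β}} v_{γα})` on the oriented edges is invertible. -/
theorem tree_log_system_unique_solution
    {V : Type*} [Fintype V] [DecidableEq V] (E : Finset (V × V))
    (htree : (graphOf E).IsTree)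
    (K : V → V → ℝ) (hK : ∀ α β, (graphOf E).Adj α β → 0 < K α β) :
    ∃! c : V → V → ℝ,
      (∀ α β, (graphOf E).Adj α β → 0 < c α β) ∧
      (∀ α β, ¬ (graphOf E).Adj α β → c α β = 1) ∧
      (∀ α β, (graphOf E).Adj α β →
        Real.log (c α β) - ∑ γ ∈ nbhd E α \ {β}, Real.log (c γ α) =
          Real.log (K α β)) := by
  classical
  have hinj := Lmap_injective E htree
  have hsurj : Function.Surjective (Lmap E) :=
    LinearMap.injective_iff_surjective.mp hinj
  set t : V → V → ℝ := fun α β =>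
    if (graphOf E).Adj α β then Real.log (K α β) else 0 with ht
  obtain ⟨v, hvt⟩ := hsurj t
  set c : V → V → ℝ := fun α β =>
    if (graphOf E).Adj α β then Real.exp (v α β) else 1 with hc
  have hlogc : ∀ α β, (graphOf E).Adj α β → Real.log (c α β) = v α β := by
    intro α β h
    simp [hc, h, Real.log_exp]
  refine ⟨c, ⟨?_, ?_, ?_⟩, ?_⟩
  · intro α β h
    simp [hc, h, Real.exp_pos]
  · intro α β h
    simp [hc, h]
  · intro α β h
    have hv := congrFun (congrFun hvt α) β
    simp only [Lmap, LinearMap.coe_mk, AddHom.coe_mk, h, if_true, ht] at hv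
    rw [hlogc α β h]
    have hsum : ∑ γ ∈ nbhd E α \ {β}, Real.log (c γ α) =
        ∑ γ ∈ nbhd E α \ {β}, v γ α := by
      apply Finset.sum_congr rfl
      intro γ hγ
      rw [Finset.mem_sdiff] at hγ
      have hadj : (graphOf E).Adj γ α := by
        have := hγ.1
        unfold nbhd at this
        rw [SimpleGraph.mem_neighborFinset] at this
        exact this.symm
      exact hlogc γ α hadj
    rw [hsum]
    exact hv
  · intro c' ⟨hpos, hone, heq⟩
    set v' : V → V → ℝ := fun α β => Real.log (c' α β) with hv'
    have hLv' : Lmap E v' = t := by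
      funext α β
      by_cases h : (graphOf E).Adj α β
      · simp only [Lmap, LinearMap.coe_mk, AddHom.coe_mk, h, if_true, ht]
        exact heq α β h
      · simp only [Lmap, LinearMap.coe_mk, AddHom.coe_mk, h, if_false, ht, hv']
        rw [hone α β h, Real.log_one]
    have hveq : v' = v := hinj (hLv'.trans hvt.symm)
    funext α β
    by_cases h : (graphOf E).Adj α β
    · have : c' α β = Real.exp (v' α β) := by
        rw [hv']
        exact (Real.exp_log (hpos α β h)).symm
      rw [this, hveq]
      simp [hc, h]
    · rw [hone α β h]
      simp [hc, h]
end

section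
/- For binary beliefs, the Jacobian of the normalized BP update at a fixed point has entries J^{α'β'}_{αβ} = (b_{αβ}(1|1) − b_{αβ}(1|0)) · 1[α' ∈ N(α)\{β}, β' = α], where b_{αβ}(s|t) = b_{αβ}(s,t)/b_β(t); the fixed point is linearly stable if the spectral radius of J is less than 1. -/
open Finset

/-- in the likelihood-ratio parameterization around the fixed point
`η ≡ 1`, the Jacobian of the normalized BP update has entries
`J^{α'β'}_{αβ} = (b_{αβ}(1|1) − b_{αβ}(1|0)) · 1[α' ∈ N(α)\{β}, β' = α]`,
where `b_{αβ}(s|t)` are the conditional beliefs of the fixed point. -/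
theorem bp_jacobian_entries
    {V : Type*} [Fintype V] [DecidableEq V] (E : Finset (V × V))
    (B : V → V → Bool → Bool → ℝ)
    (hBpos : ∀ α β, (graphOf E).Adj α β → ∀ s t, 0 < B α β s t)
    (hBnorm : ∀ α β, (graphOf E).Adj α β → ∀ t,
      B α β false t + B α β true t = 1) :
    ∀ α β, (graphOf E).Adj α β → ∀ α' β', (graphOf E).Adj α' β' →
      deriv (fun x : ℝ =>
        (B α β false true +
            (∏ γ ∈ nbhd E α \ {β}, (if (γ, α) = (α', β') then x else 1)) *
              B α β true true) /
        (B α β false false +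
            (∏ γ ∈ nbhd E α \ {β}, (if (γ, α) = (α', β') then x else 1)) *
              B α β true false)) 1 =
      (B α β true true - B α β true false) *
        (if α' ∈ nbhd E α \ {β} ∧ β' = α then 1 else 0) := by
  intro α β hαβ α' β' hα'β'
  set s := nbhd E α \ {β} with hs
  by_cases hc : α' ∈ s ∧ β' = α
  · obtain ⟨hmem, h2⟩ := hc
    rw [h2]
    have hprod : ∀ x : ℝ, (∏ γ ∈ s, (if (γ, α) = (α', α) then x else 1)) = x := by
      intro x
      have : (∏ γ ∈ s, (if (γ, α) = (α', α) then x else 1))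
          = ∏ γ ∈ s, (if γ = α' then x else 1) := by
        apply Finset.prod_congr rfl
        intro γ _
        simp [Prod.ext_iff]
      rw [this, Finset.prod_ite_eq' s α' (fun _ => x), if_pos hmem]
    have hfun : (fun x : ℝ =>
        (B α β false true + (∏ γ ∈ s, (if (γ, α) = (α', α) then x else 1)) * B α β true true) /
        (B α β false false + (∏ γ ∈ s, (if (γ, α) = (α', α) then x else 1)) * B α β true false))
        = fun x : ℝ =>
        (B α β false true + x * B α β true true) /
        (B α β false false + x * B α β true false) := by
      funext x; rw [hprod]
    rw [hfun]
    have hn := hBnorm α β hαβ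
    have hden : B α β false false + 1 * B α β true false = 1 := by
      rw [one_mul]; exact hn false
    have h1 : HasDerivAt (fun x : ℝ => B α β false true + x * B α β true true)
        (B α β true true) 1 := by
      simpa using ((hasDerivAt_id (1:ℝ)).mul_const (B α β true true)).const_add (B α β false true)
    have h2 : HasDerivAt (fun x : ℝ => B α β false false + x * B α β true false)
        (B α β true false) 1 := by
      simpa using ((hasDerivAt_id (1:ℝ)).mul_const (B α β true false)).const_add (B α β false false)
    have hD : HasDerivAt (fun x : ℝ =>
        (B α β false true + x * B α β true true) /
        (B α β false false + x * B α β true false))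
        ((B α β true true * (B α β false false + 1 * B α β true false)
          - (B α β false true + 1 * B α β true true) * B α β true false)
          / (B α β false false + 1 * B α β true false) ^ 2) 1 := by
      exact h1.div h2 (by rw [hden]; norm_num)
    rw [hD.deriv, if_pos ⟨hmem, rfl⟩, mul_one, hden]
    have hn1 := hn true
    linear_combination (-(B α β true false)) * hn1
  · have hprod : ∀ x : ℝ, (∏ γ ∈ s, (if (γ, α) = (α', β') then x else 1)) = 1 := by
      intro x
      apply Finset.prod_eq_one
      intro γ hγ
      rw [if_neg]
      intro h
      simp only [Prod.mk.injEq] at h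
      exact hc ⟨h.1 ▸ hγ, h.2.symm⟩
    have hfun : (fun x : ℝ =>
        (B α β false true + (∏ γ ∈ s, (if (γ, α) = (α', β') then x else 1)) * B α β true true) /
        (B α β false false + (∏ γ ∈ s, (if (γ, α) = (α', β') then x else 1)) * B α β true false))
        = fun _ : ℝ =>
        (B α β false true + 1 * B α β true true) /
        (B α β false false + 1 * B α β true false) := by
      funext x; rw [hprod]
    rw [hfun, deriv_const, if_neg hc, mul_zero]
end

section
/- If |b_{αβ}(1|1) − b_{αβ}(1|0)| < 1/(q_α − 1) for all vertices α with q_α ≥ 2 and all β ∈ N(α), then the spectral radius of the BP Jacobian matrix J (with entries (b_{αβ}(1|1) − b_{αβ}(1|0)) at (α,β),(α',α) for α' ∈ N(α)\{β}, zero otherwise) is strictly less than 1. -/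
open Finset

/-- The type of oriented edges of the graph determined by `E`. -/
abbrev OEdge {V : Type*} [DecidableEq V] (E : Finset (V × V)) : Type _ :=
  {e : V × V // (graphOf E).Adj e.1 e.2}

/-- if `|b_{αβ}(1|1) − b_{αβ}(1|0)| < 1/(q_α − 1)` for every vertex `α`
of degree `q_α ≥ 2` and every neighbor `β`, then the spectral radius of the BP Jacobian
matrix is strictly less than `1` (every complex eigenvalue has modulus `< 1`). -/
theorem bp_jacobian_spectral_radius_lt_one
    {V : Type*} [Fintype V] [DecidableEq V] (E : Finset (V × V))
    (κ : V → V → ℝ)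
    (hκ : ∀ α β, (graphOf E).Adj α β → 2 ≤ (graphOf E).degree α →
      |κ α β| < 1 / (((graphOf E).degree α : ℝ) - 1))
    (J : Matrix (OEdge E) (OEdge E) ℝ)
    (hJ : ∀ e e' : OEdge E,
      J e e' = if e'.1.1 ∈ nbhd E e.1.1 \ {e.1.2} ∧ e'.1.2 = e.1.1
        then κ e.1.1 e.1.2 else 0) :
    ∀ μ ∈ spectrum ℂ (J.map (fun x : ℝ => (x : ℂ))), ‖μ‖ < 1 := by
  intro μ hμ
  set M : Matrix (OEdge E) (OEdge E) ℂ := J.map (fun x : ℝ => (x : ℂ)) with hM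
  have hμ' : Module.End.HasEigenvalue (Matrix.toLin' M) μ := by
    rw [Module.End.hasEigenvalue_iff_mem_spectrum]
    have h0 : Matrix.toLin' M = Matrix.toLinAlgEquiv' M := rfl
    rw [h0, AlgEquiv.spectrum_eq Matrix.toLinAlgEquiv' M]
    exact hμ
  obtain ⟨e, he⟩ := eigenvalue_mem_ball hμ'
  obtain ⟨⟨α, β⟩, hadj⟩ := e
  set e : OEdge E := ⟨(α, β), hadj⟩ with he'
  have hdiag : M e e = 0 := by
    rw [hM, Matrix.map_apply, hJ]
    rw [if_neg]
    · simp
    · rintro ⟨h1, -⟩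
      simp only [he', nbhd, Finset.mem_sdiff, SimpleGraph.mem_neighborFinset] at h1
      exact (graphOf E).irrefl h1.1
  have hβ : β ∈ nbhd E α := by
    simpa [nbhd, SimpleGraph.mem_neighborFinset] using hadj
  have hq1 : 1 ≤ (graphOf E).degree α := by
    rw [← SimpleGraph.card_neighborFinset_eq_degree]
    exact Finset.card_pos.mpr ⟨β, hβ⟩
  -- the row sum of norms equals (q_α - 1) * |κ α β|
  have hcard : ((Finset.univ.filter
      (fun e' : OEdge E => e'.1.1 ∈ nbhd E α \ {β} ∧ e'.1.2 = α)).card : ℕ)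
      = (graphOf E).degree α - 1 := by
    rw [show (graphOf E).degree α - 1 = (nbhd E α \ {β}).card by
      rw [Finset.card_sdiff_of_subset (Finset.singleton_subset_iff.mpr hβ), Finset.card_singleton,
        nbhd, SimpleGraph.card_neighborFinset_eq_degree]]
    apply Finset.card_bij (fun e' _ => e'.1.1)
    · rintro e' he''
      exact (Finset.mem_filter.mp he'').2.1
    · rintro ⟨⟨a1, a2⟩, ha⟩ h1 ⟨⟨b1, b2⟩, hb⟩ h2 hab
      simp only [Finset.mem_filter] at h1 h2
      simp only at hab
      apply Subtype.ext
      simp only [Prod.mk.injEq]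
      exact ⟨hab, h1.2.2.trans h2.2.2.symm⟩
    · intro γ hγ
      have hγα : (graphOf E).Adj γ α := by
        have := (Finset.mem_sdiff.mp hγ).1
        simp only [nbhd, SimpleGraph.mem_neighborFinset] at this
        exact this.symm
      exact ⟨⟨(γ, α), hγα⟩, Finset.mem_filter.mpr ⟨Finset.mem_univ _, hγ, rfl⟩, rfl⟩
  have hrow : ∑ e' ∈ Finset.univ.erase e, ‖M e e'‖
      ≤ (((graphOf E).degree α : ℝ) - 1) * |κ α β| := by
    have h1 : ∑ e' ∈ Finset.univ.erase e, ‖M e e'‖ ≤ ∑ e' : OEdge E, ‖M e e'‖ :=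
      Finset.sum_le_sum_of_subset_of_nonneg (Finset.subset_univ _)
        (fun _ _ _ => norm_nonneg _)
    refine h1.trans_eq ?_
    have h2 : ∀ e' : OEdge E, ‖M e e'‖ =
        if e'.1.1 ∈ nbhd E α \ {β} ∧ e'.1.2 = α then |κ α β| else 0 := by
      intro e'
      rw [hM, Matrix.map_apply, hJ]
      simp only [he']
      split_ifs <;> simp [Real.norm_eq_abs]
    simp_rw [h2]
    rw [Finset.sum_ite, Finset.sum_const, Finset.sum_const_zero, add_zero, nsmul_eq_mul,
      hcard, Nat.cast_sub hq1, Nat.cast_one]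
  have hμle : ‖μ‖ ≤ (((graphOf E).degree α : ℝ) - 1) * |κ α β| := by
    rw [Metric.mem_closedBall, hdiag, dist_zero_right] at he
    exact he.trans hrow
  rcases le_or_gt 2 ((graphOf E).degree α) with hq2 | hq2
  · have hqpos : (0 : ℝ) < ((graphOf E).degree α : ℝ) - 1 := by
      have : (2 : ℝ) ≤ ((graphOf E).degree α : ℝ) := by exact_mod_cast hq2
      linarith
    have := hκ α β hadj hq2
    calc ‖μ‖ ≤ (((graphOf E).degree α : ℝ) - 1) * |κ α β| := hμle
      _ < (((graphOf E).degree α : ℝ) - 1) * (1 / (((graphOf E).degree α : ℝ) - 1)) :=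
          by exact mul_lt_mul_of_pos_left this hqpos
      _ = 1 := by field_simp
  · have hq : (graphOf E).degree α = 1 := le_antisymm (by omega) hq1
    have : (((graphOf E).degree α : ℝ) - 1) * |κ α β| = 0 := by
      rw [hq]; simp
    rw [this] at hμle
    linarith [hμle]
end

section
/- A square matrix J whose nonzero entries are supported on a union of vertex-disjoint directed cycles ω_1,…,ω_n (after removing vertices not on any cycle, on which J is nilpotent), with cycle products P_i = ∏ of entries along ω_i satisfying |P_i| ≤ 1, has spectral radius at most 1; its characteristic polynomial factorizes as det(J−λI) = ±λ^m ∏_i (P_i − (−λ)^{|ω_i|}·(−1)^{|ω_i|}) up to sign, where m accounts for acyclic vertices. -/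
open Polynomial

set_option linter.unusedSectionVars false

namespace DisjCyc

set_option linter.unusedSectionVars false
open scoped Classical

variable {n : Type*} [Fintype n] [DecidableEq n] {ι : Type*} [Fintype ι]

section Perm

variable (len : ι → ℕ) (cyc : (i : ι) → Fin (len i) → n) (hlen : ∀ i, 0 < len i)


/-- successor index along cycle `i`. -/
def sfin (i : ι) (j : Fin (len i)) : Fin (len i) :=
  ⟨((j : ℕ) + 1) % len i, Nat.mod_lt _ (hlen i)⟩

/-- predecessor index along cycle `i`. -/
def pfin (i : ι) (j : Fin (len i)) : Fin (len i) :=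
  ⟨((j : ℕ) + (len i - 1)) % len i, Nat.mod_lt _ (hlen i)⟩

lemma sfin_pfin (i : ι) (j : Fin (len i)) : sfin len hlen i (pfin len hlen i j) = j := by
  have h1 : 0 < len i := hlen i
  apply Fin.ext
  show (((j : ℕ) + (len i - 1)) % len i + 1) % len i = j
  rw [Nat.mod_add_mod]
  have : (j : ℕ) + (len i - 1) + 1 = (j : ℕ) + len i := by omega
  rw [this, Nat.add_mod_right, Nat.mod_eq_of_lt j.isLt]

lemma pfin_sfin (i : ι) (j : Fin (len i)) : pfin len hlen i (sfin len hlen i j) = j := by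
  have h1 : 0 < len i := hlen i
  apply Fin.ext
  show (((j : ℕ) + 1) % len i + (len i - 1)) % len i = j
  rw [Nat.mod_add_mod]
  have : (j : ℕ) + 1 + (len i - 1) = (j : ℕ) + len i := by omega
  rw [this, Nat.add_mod_right, Nat.mod_eq_of_lt j.isLt]

variable (hinj : ∀ i, Function.Injective (cyc i))
variable (hdisj : ∀ i i', i ≠ i' → Disjoint (Set.range (cyc i)) (Set.range (cyc i')))


include hdisj in
lemma cyc_i_eq {i i' : ι} {j : Fin (len i)} {j' : Fin (len i')}
    (h : cyc i j = cyc i' j') : i = i' := by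
  by_contra hne
  exact Set.disjoint_left.mp (hdisj i i' hne) ⟨j, rfl⟩ ⟨j', h.symm⟩

include hinj hdisj in
lemma cyc_sigma_eq {i i' : ι} {j : Fin (len i)} {j' : Fin (len i')}
    (h : cyc i j = cyc i' j') : (⟨i, j⟩ : Σ i, Fin (len i)) = ⟨i', j'⟩ := by
  obtain rfl := cyc_i_eq len cyc hdisj h
  exact congrArg _ (hinj i h)

/-- forward map of the permutation rotating the cycles in `S`. -/
noncomputable def cfun (S : Finset ι) (x : n) : n :=
  if h : ∃ p : (i : ι) × Fin (len i), p.1 ∈ S ∧ cyc p.1 p.2 = x then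
    cyc h.choose.1 (sfin len hlen h.choose.1 h.choose.2)
  else x

/-- backward map. -/
noncomputable def pfun (S : Finset ι) (x : n) : n :=
  if h : ∃ p : (i : ι) × Fin (len i), p.1 ∈ S ∧ cyc p.1 p.2 = x then
    cyc h.choose.1 (pfin len hlen h.choose.1 h.choose.2)
  else x

include hinj hdisj in
lemma cfun_cyc {S : Finset ι} {i : ι} (hi : i ∈ S) (j : Fin (len i)) :
    cfun len cyc hlen S (cyc i j) = cyc i (sfin len hlen i j) := by
  have h : ∃ p : (i : ι) × Fin (len i), p.1 ∈ S ∧ cyc p.1 p.2 = cyc i j := ⟨⟨i, j⟩, hi, rfl⟩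
  rw [cfun, dif_pos h]
  have he : (⟨h.choose.1, h.choose.2⟩ : Σ i, Fin (len i)) = ⟨i, j⟩ :=
    cyc_sigma_eq len cyc hinj hdisj h.choose_spec.2
  rw [show h.choose = ⟨i, j⟩ from (Sigma.eta h.choose) ▸ he]

include hinj hdisj in
lemma pfun_cyc {S : Finset ι} {i : ι} (hi : i ∈ S) (j : Fin (len i)) :
    pfun len cyc hlen S (cyc i j) = cyc i (pfin len hlen i j) := by
  have h : ∃ p : (i : ι) × Fin (len i), p.1 ∈ S ∧ cyc p.1 p.2 = cyc i j := ⟨⟨i, j⟩, hi, rfl⟩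
  rw [pfun, dif_pos h]
  have he : (⟨h.choose.1, h.choose.2⟩ : Σ i, Fin (len i)) = ⟨i, j⟩ :=
    cyc_sigma_eq len cyc hinj hdisj h.choose_spec.2
  rw [show h.choose = ⟨i, j⟩ from (Sigma.eta h.choose) ▸ he]

lemma cfun_fix {S : Finset ι} {x : n}
    (h : ¬ ∃ p : (i : ι) × Fin (len i), p.1 ∈ S ∧ cyc p.1 p.2 = x) :
    cfun len cyc hlen S x = x := dif_neg h

lemma pfun_fix {S : Finset ι} {x : n}
    (h : ¬ ∃ p : (i : ι) × Fin (len i), p.1 ∈ S ∧ cyc p.1 p.2 = x) :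
    pfun len cyc hlen S x = x := dif_neg h

/-- The permutation rotating all cycles in `S` simultaneously. -/
noncomputable def cperm (S : Finset ι) : Equiv.Perm n where
  toFun := cfun len cyc hlen S
  invFun := pfun len cyc hlen S
  left_inv := by
    intro x
    by_cases h : ∃ p : (i : ι) × Fin (len i), p.1 ∈ S ∧ cyc p.1 p.2 = x
    · obtain ⟨⟨i, j⟩, hi, rfl⟩ := h
      rw [cfun_cyc len cyc hlen hinj hdisj hi, pfun_cyc len cyc hlen hinj hdisj hi,
        pfin_sfin]
    · rw [cfun_fix len cyc hlen h, pfun_fix len cyc hlen h]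
  right_inv := by
    intro x
    by_cases h : ∃ p : (i : ι) × Fin (len i), p.1 ∈ S ∧ cyc p.1 p.2 = x
    · obtain ⟨⟨i, j⟩, hi, rfl⟩ := h
      rw [pfun_cyc len cyc hlen hinj hdisj hi, cfun_cyc len cyc hlen hinj hdisj hi,
        sfin_pfin]
    · rw [pfun_fix len cyc hlen h, cfun_fix len cyc hlen h]

lemma cperm_cyc {S : Finset ι} {i : ι} (hi : i ∈ S) (j : Fin (len i)) :
    cperm len cyc hlen hinj hdisj S (cyc i j) = cyc i (sfin len hlen i j) :=
  cfun_cyc len cyc hlen hinj hdisj hi j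

lemma cperm_fix {S : Finset ι} {x : n}
    (h : ¬ ∃ p : (i : ι) × Fin (len i), p.1 ∈ S ∧ cyc p.1 p.2 = x) :
    cperm len cyc hlen hinj hdisj S x = x := cfun_fix len cyc hlen h

lemma cperm_fix' {S : Finset ι} {x : n}
    (h : ∀ i ∈ S, x ∉ Set.range (cyc i)) :
    cperm len cyc hlen hinj hdisj S x = x := by
  apply cperm_fix
  rintro ⟨⟨i, j⟩, hi, rfl⟩
  exact h i hi ⟨j, rfl⟩

lemma cperm_moves {S : Finset ι} {x : n}
    (h : cperm len cyc hlen hinj hdisj S x ≠ x) :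
    ∃ i ∈ S, ∃ j, x = cyc i j ∧
      cperm len cyc hlen hinj hdisj S x = cyc i (sfin len hlen i j) := by
  by_cases hc : ∃ p : (i : ι) × Fin (len i), p.1 ∈ S ∧ cyc p.1 p.2 = x
  · obtain ⟨⟨i, j⟩, hi, rfl⟩ := hc
    exact ⟨i, hi, j, rfl, cperm_cyc len cyc hlen hinj hdisj hi j⟩
  · exact absurd (cperm_fix len cyc hlen hinj hdisj hc) h

end Perm

section Graph

variable (len : ι → ℕ) (cyc : (i : ι) → Fin (len i) → n) (hlen : ∀ i, 0 < len i)
variable (hinj : ∀ i, Function.Injective (cyc i))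
variable (hdisj : ∀ i i', i ≠ i' → Disjoint (Set.range (cyc i)) (Set.range (cyc i')))
variable (J : Matrix n n ℝ)
variable (harc : ∀ (i : ι) (j : Fin (len i)),
      J (cyc i ⟨((j : ℕ) + 1) % len i, Nat.mod_lt _ (hlen i)⟩) (cyc i j) ≠ 0)
variable (hall : ∀ (m : ℕ) (hm : 0 < m) (d : Fin m → n),
      Function.Injective d →
      (∀ j : Fin m, J (d ⟨((j : ℕ) + 1) % m, Nat.mod_lt _ hm⟩) (d j) ≠ 0) →
      ∃ i, Set.range d = Set.range (cyc i))

include hinj in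
lemma card_eq {L : ℕ} {d : Fin L → n} (hd : Function.Injective d) {i : ι}
    (h : Set.range d = Set.range (cyc i)) : L = len i := by
  have hc : ∀ {M : ℕ} (f : Fin M → n), Function.Injective f →
      (Finset.univ.image f).card = M := by
    intro M f hf
    rw [Finset.card_image_of_injective _ hf, Finset.card_univ, Fintype.card_fin]
  have hco : ∀ {M : ℕ} (f : Fin M → n), (↑(Finset.univ.image f) : Set n) = Set.range f := by
    intro M f
    rw [Finset.coe_image, Finset.coe_univ, Set.image_univ]
  have : Finset.univ.image d = Finset.univ.image (cyc i) := by
    apply Finset.coe_injective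
    rw [hco, hco, h]
  rw [← hc d hd, this, hc (cyc i) (hinj i)]

include hlen hinj hdisj harc hall in
lemma rigid {i : ι} {j k : Fin (len i)} (h : J (cyc i k) (cyc i j) ≠ 0) :
    k = sfin len hlen i j := by
  have h0 : 0 < len i := hlen i
  set δ := ((j : ℕ) + len i - (k : ℕ)) % len i with hδ
  have hδl : δ < len i := Nat.mod_lt _ h0
  set L := δ + 1 with hLdef
  have hL0 : 0 < L := Nat.succ_pos _
  have hLl : L ≤ len i := by omega
  set d : Fin L → n := fun t => cyc i ⟨((k : ℕ) + (t : ℕ)) % len i, Nat.mod_lt _ h0⟩ with hd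
  have hdinj : Function.Injective d := by
    intro t t' ht
    have hv : ((k : ℕ) + (t : ℕ)) % len i = ((k : ℕ) + (t' : ℕ)) % len i :=
      congrArg Fin.val (hinj i ht)
    have hmod : ((t : ℕ) : ℕ) % len i = ((t' : ℕ) : ℕ) % len i :=
      Nat.ModEq.add_left_cancel' (k : ℕ) hv
    apply Fin.ext
    rw [← Nat.mod_eq_of_lt (lt_of_lt_of_le t.isLt hLl),
      ← Nat.mod_eq_of_lt (lt_of_lt_of_le t'.isLt hLl)]
    exact hmod
  have harcs : ∀ t : Fin L, J (d ⟨((t : ℕ) + 1) % L, Nat.mod_lt _ hL0⟩) (d t) ≠ 0 := by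
    intro t
    by_cases hlast : (t : ℕ) + 1 = L
    · have h1 : ((t : ℕ) + 1) % L = 0 := by rw [hlast, Nat.mod_self]
      have hd0 : d ⟨((t : ℕ) + 1) % L, Nat.mod_lt _ hL0⟩ = cyc i k := by
        simp only [hd]
        congr 1
        apply Fin.ext
        show ((k : ℕ) + (((t : ℕ) + 1) % L)) % len i = (k : ℕ)
        rw [h1, Nat.add_zero, Nat.mod_eq_of_lt k.isLt]
      have hdt : d t = cyc i j := by
        simp only [hd]
        congr 1
        apply Fin.ext
        show ((k : ℕ) + (t : ℕ)) % len i = (j : ℕ)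
        have htδ : (t : ℕ) = δ := by omega
        rw [htδ, hδ, Nat.add_mod_mod]
        have he : (k : ℕ) + ((j : ℕ) + len i - (k : ℕ)) = (j : ℕ) + len i := by
          have := k.isLt; omega
        rw [he, Nat.add_mod_right, Nat.mod_eq_of_lt j.isLt]
      rw [hd0, hdt]
      exact h
    · have h2 : (t : ℕ) + 1 < L := by have := t.isLt; omega
      have h1 : ((t : ℕ) + 1) % L = (t : ℕ) + 1 := Nat.mod_eq_of_lt h2
      have key := harc i ⟨((k : ℕ) + (t : ℕ)) % len i, Nat.mod_lt _ h0⟩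
      have hidx : d ⟨((t : ℕ) + 1) % L, Nat.mod_lt _ hL0⟩ =
          cyc i ⟨(((k : ℕ) + (t : ℕ)) % len i + 1) % len i, Nat.mod_lt _ h0⟩ := by
        simp only [hd]
        congr 1
        apply Fin.ext
        show ((k : ℕ) + (((t : ℕ) + 1) % L)) % len i = (((k : ℕ) + (t : ℕ)) % len i + 1) % len i
        rw [h1, Nat.mod_add_mod, Nat.add_assoc]
      rw [hidx]
      exact key
  obtain ⟨i', hri⟩ := hall L hL0 d hdinj harcs
  have hki : cyc i k ∈ Set.range d := by
    refine ⟨⟨0, hL0⟩, ?_⟩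
    simp only [hd]
    congr 1
    apply Fin.ext
    show ((k : ℕ) + 0) % len i = (k : ℕ)
    rw [Nat.add_zero, Nat.mod_eq_of_lt k.isLt]
  have hii : i' = i := by
    by_contra hne
    exact Set.disjoint_left.mp (hdisj i' i hne) (hri ▸ hki) ⟨k, rfl⟩
  rw [hii] at hri
  have hLlen : L = len i := card_eq len cyc hinj hdinj hri
  apply Fin.ext
  show (k : ℕ) = ((j : ℕ) + 1) % len i
  have hjk : (j : ℕ) < len i := j.isLt
  have hkk : (k : ℕ) < len i := k.isLt
  have hδ1 : ((j : ℕ) + len i - (k : ℕ)) % len i = len i - 1 := by rw [← hδ]; omega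
  have hmod2 : ∀ x : ℕ, x < len i + len i →
      x % len i = if x < len i then x else x - len i := by
    intro x hx
    split
    · exact Nat.mod_eq_of_lt ‹_›
    · rw [Nat.mod_eq_sub_mod (by omega), Nat.mod_eq_of_lt (by omega)]
  have h1 := hmod2 ((j : ℕ) + len i - (k : ℕ)) (by omega)
  have h2 := hmod2 ((j : ℕ) + 1) (by omega)
  rw [h2]
  rw [h1] at hδ1
  split_ifs at hδ1 ⊢ <;> omega

include hinj hall in
lemma loop_cycle {x : n} (h : J x x ≠ 0) :
    ∃ i, len i = 1 ∧ Set.range (cyc i) = {x} := by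
  have hdinj : Function.Injective (fun _ : Fin 1 => x) := fun a b _ => Subsingleton.elim a b
  have harcs : ∀ j : Fin 1, J ((fun _ : Fin 1 => x) ⟨((j : ℕ) + 1) % 1, Nat.mod_lt _ one_pos⟩)
      ((fun _ : Fin 1 => x) j) ≠ 0 := fun _ => h
  obtain ⟨i, hri⟩ := hall 1 one_pos _ hdinj harcs
  have hrd : Set.range (fun _ : Fin 1 => x) = {x} := Set.range_const
  exact ⟨i, (card_eq len cyc hinj hdinj hri).symm, by rw [← hri, hrd]⟩

include hlen hinj hdisj harc hall in
lemma diag_zero_two {i : ι} (h2 : 2 ≤ len i) (j : Fin (len i)) :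
    J (cyc i j) (cyc i j) = 0 := by
  by_contra h
  have hs := rigid len cyc hlen hinj hdisj J harc hall h
  have hv : (j : ℕ) = ((j : ℕ) + 1) % len i := congrArg Fin.val hs
  have hjl : (j : ℕ) < len i := j.isLt
  rcases Nat.lt_or_ge ((j : ℕ) + 1) (len i) with hlt | hge
  · rw [Nat.mod_eq_of_lt hlt] at hv; omega
  · have he : (j : ℕ) + 1 = len i := by omega
    rw [he, Nat.mod_self] at hv
    omega

include hinj hall in
lemma diag_zero_off {x : n} (hx : ∀ i, x ∉ Set.range (cyc i)) : J x x = 0 := by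
  by_contra h
  obtain ⟨i, _, hri⟩ := loop_cycle len cyc hinj J hall h
  exact hx i (hri ▸ rfl)

include hlen hinj hdisj harc hall in
lemma orbit (σ : Equiv.Perm n) (hσ : ∀ x, σ x ≠ x → J (σ x) x ≠ 0) {x : n} (hx : σ x ≠ x) :
    ∃ i, 2 ≤ len i ∧ x ∈ Set.range (cyc i) ∧
      ∀ k, σ (cyc i k) = cyc i (sfin len hlen i k) := by
  have hper : x ∈ Function.periodicPts ⇑σ := by
    refine ⟨orderOf σ, orderOf_pos σ, ?_⟩
    show σ^[orderOf σ] x = x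
    rw [← Equiv.Perm.coe_pow, pow_orderOf_eq_one]
    rfl
  set m := Function.minimalPeriod ⇑σ x with hm
  have hm0 : 0 < m := Function.minimalPeriod_pos_of_mem_periodicPts hper
  set d : Fin m → n := fun t => σ^[(t : ℕ)] x with hd
  have hdinj : Function.Injective d := by
    intro t t' ht
    exact Fin.ext (Function.iterate_injOn_Iio_minimalPeriod t.isLt t'.isLt ht)
  have hmoved : ∀ t : ℕ, σ (σ^[t] x) ≠ σ^[t] x := by
    intro t heq
    apply hx
    have h2 : σ^[t] (σ x) = σ^[t] x := by
      rw [← Function.iterate_succ_apply, Function.iterate_succ_apply']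
      exact heq
    exact σ.injective.iterate t h2
  have harcs : ∀ t : Fin m, J (d ⟨((t : ℕ) + 1) % m, Nat.mod_lt _ hm0⟩) (d t) ≠ 0 := by
    intro t
    have hstep : d ⟨((t : ℕ) + 1) % m, Nat.mod_lt _ hm0⟩ = σ (d t) := by
      show σ^[((t : ℕ) + 1) % m] x = σ (σ^[(t : ℕ)] x)
      rw [Function.iterate_mod_minimalPeriod_eq, Function.iterate_succ_apply']
    rw [hstep]
    exact hσ _ (hmoved t)
  obtain ⟨i, hri⟩ := hall m hm0 d hdinj harcs
  have hxr : x ∈ Set.range (cyc i) := by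
    rw [← hri]
    exact ⟨⟨0, hm0⟩, rfl⟩
  have hsucc : ∀ k, σ (cyc i k) = cyc i (sfin len hlen i k) := by
    intro k
    have hy : cyc i k ∈ Set.range d := by rw [hri]; exact ⟨k, rfl⟩
    obtain ⟨t, ht⟩ := hy
    have hσy : σ (cyc i k) ∈ Set.range (cyc i) := by
      rw [← hri]
      refine ⟨⟨((t : ℕ) + 1) % m, Nat.mod_lt _ hm0⟩, ?_⟩
      show σ^[((t : ℕ) + 1) % m] x = σ (cyc i k)
      rw [Function.iterate_mod_minimalPeriod_eq, Function.iterate_succ_apply']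
      exact congrArg σ ht
    obtain ⟨k', hk'⟩ := hσy
    have hne : σ (cyc i k) ≠ cyc i k := by rw [← ht]; exact hmoved (t : ℕ)
    have hJ : J (cyc i k') (cyc i k) ≠ 0 := by
      rw [hk']
      exact hσ _ hne
    have := rigid len cyc hlen hinj hdisj J harc hall hJ
    rw [← hk', this]
  refine ⟨i, ?_, hxr, hsucc⟩
  by_contra h2
  have hl1 : len i = 1 := by have := hlen i; omega
  obtain ⟨j, hj⟩ := hxr
  have hjv : (j : ℕ) = 0 := by have := j.isLt; omega
  have hsj : sfin len hlen i j = j := by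
    apply Fin.ext
    show ((j : ℕ) + 1) % len i = (j : ℕ)
    have he : (j : ℕ) + 1 = len i := by omega
    rw [he, Nat.mod_self]
    omega
  have := hsucc j
  rw [hsj, hj] at this
  exact hx this

end Graph

section PermAlg

variable (len : ι → ℕ) (cyc : (i : ι) → Fin (len i) → n) (hlen : ∀ i, 0 < len i)
variable (hinj : ∀ i, Function.Injective (cyc i))
variable (hdisj : ∀ i i', i ≠ i' → Disjoint (Set.range (cyc i)) (Set.range (cyc i')))

lemma sfin_ne {i : ι} (h2 : 2 ≤ len i) (j : Fin (len i)) : sfin len hlen i j ≠ j := by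
  intro he
  have hv : ((j : ℕ) + 1) % len i = (j : ℕ) := congrArg Fin.val he
  have hj := j.isLt
  rcases Nat.lt_or_ge ((j : ℕ) + 1) (len i) with hlt | hge
  · rw [Nat.mod_eq_of_lt hlt] at hv; omega
  · have he2 : (j : ℕ) + 1 = len i := by omega
    rw [he2, Nat.mod_self] at hv
    omega

include hinj hdisj in
lemma cperm_empty : cperm len cyc hlen hinj hdisj ∅ = 1 := by
  ext x
  show cperm len cyc hlen hinj hdisj ∅ x = x
  apply cperm_fix
  rintro ⟨p, hp, -⟩
  exact absurd hp (Finset.notMem_empty _)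

include hinj hdisj in
lemma cperm_notin_range {i : ι} {x : n} (hx : x ∉ Set.range (cyc i)) :
    cperm len cyc hlen hinj hdisj {i} x = x := by
  apply cperm_fix' len cyc hlen hinj hdisj
  intro i' hi'
  rw [Finset.mem_singleton] at hi'
  subst hi'
  exact hx

include hinj hdisj in
lemma cperm_insert {a : ι} {S : Finset ι} (ha : a ∉ S) :
    cperm len cyc hlen hinj hdisj (insert a S) =
      cperm len cyc hlen hinj hdisj {a} * cperm len cyc hlen hinj hdisj S := by
  ext x
  show _ = cperm len cyc hlen hinj hdisj {a} (cperm len cyc hlen hinj hdisj S x)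
  by_cases hc : ∃ p : (i : ι) × Fin (len i), p.1 ∈ insert a S ∧ cyc p.1 p.2 = x
  · obtain ⟨⟨i, j⟩, hi, rfl⟩ := hc
    rcases Finset.mem_insert.mp hi with heq | hiS
    · subst heq
      rw [cperm_cyc len cyc hlen hinj hdisj (Finset.mem_insert_self i S) j]
      have hS : cperm len cyc hlen hinj hdisj S (cyc i j) = cyc i j := by
        apply cperm_fix' len cyc hlen hinj hdisj
        intro i' hi' hmem
        obtain ⟨j', hj'⟩ := hmem
        obtain rfl := cyc_i_eq len cyc hdisj hj'
        exact ha hi'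
      rw [hS, cperm_cyc len cyc hlen hinj hdisj (Finset.mem_singleton_self i) j]
    · rw [cperm_cyc len cyc hlen hinj hdisj (Finset.mem_insert_of_mem hiS) j,
        cperm_cyc len cyc hlen hinj hdisj hiS j]
      refine (cperm_notin_range len cyc hlen hinj hdisj ?_).symm
      intro hmem
      obtain ⟨j', hj'⟩ := hmem
      obtain rfl := cyc_i_eq len cyc hdisj hj'
      exact ha hiS
  · have h1 : cperm len cyc hlen hinj hdisj (insert a S) x = x := cperm_fix len cyc hlen hinj hdisj hc
    have h2 : cperm len cyc hlen hinj hdisj S x = x := by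
      apply cperm_fix
      rintro ⟨p, hp, he⟩
      exact hc ⟨p, Finset.mem_insert_of_mem hp, he⟩
    have h3 : cperm len cyc hlen hinj hdisj {a} x = x := by
      apply cperm_fix
      rintro ⟨p, hp, he⟩
      rw [Finset.mem_singleton] at hp
      exact hc ⟨p, by rw [hp]; exact Finset.mem_insert_self a S, he⟩
    rw [h1, h2, h3]

include hinj hdisj in
lemma cperm_single_pow (i : ι) (m : ℕ) (j : Fin (len i)) :
    (cperm len cyc hlen hinj hdisj {i} ^ m) (cyc i j) =
      cyc i ⟨((j : ℕ) + m) % len i, Nat.mod_lt _ (hlen i)⟩ := by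
  induction m with
  | zero =>
    rw [pow_zero]
    show cyc i j = _
    congr 1
    apply Fin.ext
    show (j : ℕ) = ((j : ℕ) + 0) % len i
    rw [Nat.add_zero, Nat.mod_eq_of_lt j.isLt]
  | succ m ih =>
    rw [pow_succ']
    show cperm len cyc hlen hinj hdisj {i} ((cperm len cyc hlen hinj hdisj {i} ^ m) (cyc i j)) = _
    rw [ih, cperm_cyc len cyc hlen hinj hdisj (Finset.mem_singleton_self i)]
    congr 1
    apply Fin.ext
    show (((j : ℕ) + m) % len i + 1) % len i = ((j : ℕ) + (m + 1)) % len i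
    rw [Nat.mod_add_mod, Nat.add_assoc]

include hinj hdisj in
lemma cperm_single_support {i : ι} (h2 : 2 ≤ len i) :
    (cperm len cyc hlen hinj hdisj {i}).support = Finset.univ.image (cyc i) := by
  ext x
  rw [Equiv.Perm.mem_support, Finset.mem_image]
  constructor
  · intro hx
    obtain ⟨i', hi', j, rfl, -⟩ := cperm_moves len cyc hlen hinj hdisj hx
    rw [Finset.mem_singleton] at hi'
    subst hi'
    exact ⟨j, Finset.mem_univ j, rfl⟩
  · rintro ⟨j, -, rfl⟩
    rw [cperm_cyc len cyc hlen hinj hdisj (Finset.mem_singleton_self i) j]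
    intro he
    exact sfin_ne len hlen h2 j (hinj i he)

include hinj hdisj in
lemma cperm_single_isCycle {i : ι} (h2 : 2 ≤ len i) :
    (cperm len cyc hlen hinj hdisj {i}).IsCycle := by
  refine ⟨cyc i ⟨0, hlen i⟩, ?_, ?_⟩
  · rw [cperm_cyc len cyc hlen hinj hdisj (Finset.mem_singleton_self i)]
    intro he
    exact sfin_ne len hlen h2 _ (hinj i he)
  · intro y hy
    obtain ⟨i', hi', j, rfl, -⟩ := cperm_moves len cyc hlen hinj hdisj hy
    obtain rfl := (Finset.mem_singleton.mp hi').symm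
    refine ⟨((j : ℕ) : ℤ), ?_⟩
    rw [zpow_natCast, cperm_single_pow len cyc hlen hinj hdisj i (j : ℕ) ⟨0, hlen i⟩]
    congr 1
    apply Fin.ext
    show (0 + (j : ℕ)) % len i = (j : ℕ)
    rw [Nat.zero_add, Nat.mod_eq_of_lt j.isLt]

include hinj hdisj in
lemma cperm_single_sign {i : ι} (h2 : 2 ≤ len i) :
    Equiv.Perm.sign (cperm len cyc hlen hinj hdisj {i}) = (-1) ^ (len i + 1) := by
  rw [(cperm_single_isCycle len cyc hlen hinj hdisj h2).sign,
    cperm_single_support len cyc hlen hinj hdisj h2,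
    Finset.card_image_of_injective _ (hinj i), Finset.card_univ, Fintype.card_fin,
    pow_succ, mul_neg_one]

include hinj hdisj in
lemma cperm_sign {S : Finset ι} (hS : ∀ i ∈ S, 2 ≤ len i) :
    Equiv.Perm.sign (cperm len cyc hlen hinj hdisj S) = ∏ i ∈ S, (-1) ^ (len i + 1) := by
  induction S using Finset.induction_on with
  | empty => rw [cperm_empty, Finset.prod_empty, map_one]
  | @insert a S ha ih =>
    rw [cperm_insert len cyc hlen hinj hdisj ha, map_mul,
      cperm_single_sign len cyc hlen hinj hdisj (hS a (Finset.mem_insert_self a S)),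
      ih (fun i hi => hS i (Finset.mem_insert_of_mem hi)), Finset.prod_insert ha]

include hinj hdisj in
lemma cperm_inj {S S' : Finset ι} (hS : ∀ i ∈ S, 2 ≤ len i) (hS' : ∀ i ∈ S', 2 ≤ len i)
    (h : cperm len cyc hlen hinj hdisj S = cperm len cyc hlen hinj hdisj S') : S = S' := by
  have key : ∀ (T : Finset ι), (∀ i ∈ T, 2 ≤ len i) → ∀ i : ι,
      (i ∈ T ↔ cperm len cyc hlen hinj hdisj T (cyc i ⟨0, hlen i⟩) ≠ cyc i ⟨0, hlen i⟩) := by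
    intro T hT i
    constructor
    · intro hi
      rw [cperm_cyc len cyc hlen hinj hdisj hi]
      intro he
      exact sfin_ne len hlen (hT i hi) _ (hinj i he)
    · intro hne
      obtain ⟨i', hi', j, hj, -⟩ := cperm_moves len cyc hlen hinj hdisj hne
      obtain rfl := cyc_i_eq len cyc hdisj hj.symm
      exact hi'
  ext i
  rw [key S hS i, key S' hS' i, h]

end PermAlg

section Class

variable (len : ι → ℕ) (cyc : (i : ι) → Fin (len i) → n) (hlen : ∀ i, 0 < len i)
variable (hinj : ∀ i, Function.Injective (cyc i))
variable (hdisj : ∀ i i', i ≠ i' → Disjoint (Set.range (cyc i)) (Set.range (cyc i')))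
variable (J : Matrix n n ℝ)
variable (harc : ∀ (i : ι) (j : Fin (len i)),
      J (cyc i ⟨((j : ℕ) + 1) % len i, Nat.mod_lt _ (hlen i)⟩) (cyc i j) ≠ 0)
variable (hall : ∀ (m : ℕ) (hm : 0 < m) (d : Fin m → n),
      Function.Injective d →
      (∀ j : Fin m, J (d ⟨((j : ℕ) + 1) % m, Nat.mod_lt _ hm⟩) (d j) ≠ 0) →
      ∃ i, Set.range d = Set.range (cyc i))

include hlen hinj hdisj harc hall in
lemma good_classify (σ : Equiv.Perm n) (hσ : ∀ x, σ x ≠ x → J (σ x) x ≠ 0) :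
    ∃ S : Finset ι, (∀ i ∈ S, 2 ≤ len i) ∧ σ = cperm len cyc hlen hinj hdisj S := by
  classical
  set S := Finset.univ.filter
    (fun i : ι => 2 ≤ len i ∧ σ (cyc i ⟨0, hlen i⟩) ≠ cyc i ⟨0, hlen i⟩) with hSdef
  refine ⟨S, fun i hi => ((Finset.mem_filter.mp hi).2).1, ?_⟩
  ext x
  show σ x = cperm len cyc hlen hinj hdisj S x
  by_cases hx : σ x = x
  · rw [hx]
    refine (cperm_fix' len cyc hlen hinj hdisj ?_).symm
    intro i hi hmem
    obtain ⟨j, rfl⟩ := hmem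
    have hi2 := (Finset.mem_filter.mp hi).2
    obtain ⟨i', h2', hx', hsucc⟩ :=
      orbit len cyc hlen hinj hdisj J harc hall σ hσ hi2.2
    obtain ⟨j0, hj0⟩ := hx'
    obtain rfl := (cyc_i_eq len cyc hdisj hj0).symm
    have := hsucc j
    rw [hx] at this
    exact sfin_ne len hlen hi2.1 j (hinj i this.symm)
  · obtain ⟨i, h2, hxr, hsucc⟩ := orbit len cyc hlen hinj hdisj J harc hall σ hσ hx
    obtain ⟨j, rfl⟩ := hxr
    have hiS : i ∈ S := by
      refine Finset.mem_filter.mpr ⟨Finset.mem_univ i, h2, ?_⟩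
      rw [hsucc ⟨0, hlen i⟩]
      exact fun he => sfin_ne len hlen h2 _ (hinj i he)
    rw [hsucc j, cperm_cyc len cyc hlen hinj hdisj hiS j]

include hlen hinj hdisj harc hall in
lemma charpoly_eq :
    J.charpoly = X ^ (Fintype.card n - ∑ i, len i) *
      ∏ i, (X ^ (len i) -
        C (∏ j : Fin (len i), J (cyc i (sfin len hlen i j)) (cyc i j))) := by
  classical
  set P : ι → ℝ := fun i => ∏ j : Fin (len i), J (cyc i (sfin len hlen i j)) (cyc i j) with hPdef
  set I2 : Finset ι := Finset.univ.filter (fun i : ι => 2 ≤ len i) with hI2def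
  set m : ℕ := Fintype.card n - ∑ i, len i with hmdef
  -- the off-cycle vertex set
  set B : Finset n := Finset.univ.biUnion (fun i => Finset.univ.image (cyc i)) with hBdef
  have hmemB : ∀ x : n, x ∈ B ↔ ∃ i, x ∈ Set.range (cyc i) := by
    intro x
    rw [hBdef, Finset.mem_biUnion]
    constructor
    · rintro ⟨i, -, hx⟩
      obtain ⟨j, -, rfl⟩ := Finset.mem_image.mp hx
      exact ⟨i, j, rfl⟩
    · rintro ⟨i, j, rfl⟩
      exact ⟨i, Finset.mem_univ i, Finset.mem_image.mpr ⟨j, Finset.mem_univ j, rfl⟩⟩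
  have hdisjB : ∀ i ∈ Finset.univ, ∀ i' ∈ Finset.univ, i ≠ i' →
      Disjoint (Finset.univ.image (cyc i)) (Finset.univ.image (cyc i')) := by
    intro i _ i' _ hne
    refine Finset.disjoint_left.mpr ?_
    intro a ha ha'
    obtain ⟨j, -, rfl⟩ := Finset.mem_image.mp ha
    obtain ⟨j', -, hj'⟩ := Finset.mem_image.mp ha'
    exact hne (cyc_i_eq len cyc hdisj hj').symm
  have hcardB : B.card = ∑ i, len i := by
    rw [hBdef, Finset.card_biUnion hdisjB]
    refine Finset.sum_congr rfl fun i _ => ?_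
    rw [Finset.card_image_of_injective _ (hinj i), Finset.card_univ, Fintype.card_fin]
  have hcardoff : (Finset.univ \ B).card = m := by
    rw [Finset.card_sdiff_of_subset (Finset.subset_univ B), Finset.card_univ, hcardB, hmdef]
  -- splitting a product over all of n
  have hsplit : ∀ f : n → ℝ[X],
      ∏ x, f x = (∏ i : ι, ∏ j : Fin (len i), f (cyc i j)) * ∏ x ∈ Finset.univ \ B, f x := by
    intro f
    rw [← Finset.prod_sdiff (Finset.subset_univ B), mul_comm]
    congr 1
    rw [hBdef, Finset.prod_biUnion hdisjB]
    refine Finset.prod_congr rfl fun i _ => ?_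
    rw [Finset.prod_image (fun j _ j' _ h => hinj i h)]
  -- the term of a single good permutation
  have hT : ∀ S ∈ I2.powerset,
      (Equiv.Perm.sign (cperm len cyc hlen hinj hdisj S) : ℤ) •
        ∏ x, Matrix.charmatrix J (cperm len cyc hlen hinj hdisj S x) x =
      ((∏ i ∈ S, -C (P i)) * ∏ i ∈ I2 \ S, X ^ (len i)) *
        ((∏ i ∈ Finset.univ.filter (fun i : ι => ¬ 2 ≤ len i), (X ^ (len i) - C (P i))) *
          X ^ m) := by
    intro S hSmem
    have hS : ∀ i ∈ S, 2 ≤ len i := by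
      intro i hi
      exact (Finset.mem_filter.mp (Finset.mem_powerset.mp hSmem hi)).2
    have hSsub : S ⊆ I2 := Finset.mem_powerset.mp hSmem
    -- blocks
    have hblockS : ∀ i ∈ S,
        ∏ j : Fin (len i), Matrix.charmatrix J (cperm len cyc hlen hinj hdisj S (cyc i j)) (cyc i j)
          = (-1) ^ (len i) * C (P i) := by
      intro i hi
      have h1 : ∀ j : Fin (len i),
          Matrix.charmatrix J (cperm len cyc hlen hinj hdisj S (cyc i j)) (cyc i j)
            = (-1) * C (J (cyc i (sfin len hlen i j)) (cyc i j)) := by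
        intro j
        rw [cperm_cyc len cyc hlen hinj hdisj hi j,
          Matrix.charmatrix_apply_ne _ _ _ (fun he => sfin_ne len hlen (hS i hi) j (hinj i he)),
          neg_one_mul]
      rw [Finset.prod_congr rfl (fun j _ => h1 j), Finset.prod_mul_distrib,
        Finset.prod_const, Finset.card_univ, Fintype.card_fin, ← map_prod]
    have hfixout : ∀ i ∉ S, ∀ j : Fin (len i),
        cperm len cyc hlen hinj hdisj S (cyc i j) = cyc i j := by
      intro i hi j
      apply cperm_fix' len cyc hlen hinj hdisj
      intro i' hi' hmem
      obtain ⟨j', hj'⟩ := hmem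
      obtain rfl := cyc_i_eq len cyc hdisj hj'
      exact hi hi'
    have hblockNS : ∀ i ∈ I2 \ S,
        ∏ j : Fin (len i), Matrix.charmatrix J (cperm len cyc hlen hinj hdisj S (cyc i j)) (cyc i j)
          = X ^ (len i) := by
      intro i hi
      obtain ⟨hiI2, hiS⟩ := Finset.mem_sdiff.mp hi
      have h2 : 2 ≤ len i := (Finset.mem_filter.mp hiI2).2
      have h1 : ∀ j : Fin (len i),
          Matrix.charmatrix J (cperm len cyc hlen hinj hdisj S (cyc i j)) (cyc i j) = X := by
        intro j
        rw [hfixout i hiS j, Matrix.charmatrix_apply_eq,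
          diag_zero_two len cyc hlen hinj hdisj J harc hall h2 j, map_zero, sub_zero]
      rw [Finset.prod_congr rfl (fun j _ => h1 j), Finset.prod_const, Finset.card_univ,
        Fintype.card_fin]
    have hblock1 : ∀ i ∈ Finset.univ.filter (fun i : ι => ¬ 2 ≤ len i),
        ∏ j : Fin (len i), Matrix.charmatrix J (cperm len cyc hlen hinj hdisj S (cyc i j)) (cyc i j)
          = X ^ (len i) - C (P i) := by
      intro i hi
      have hl1 : len i = 1 := by
        have := hlen i
        have := (Finset.mem_filter.mp hi).2
        omega
      have hiS : i ∉ S := fun h => by have := hS i h; omega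
      have huniq : ∀ j : Fin (len i), j = ⟨0, hlen i⟩ := by
        intro j
        apply Fin.ext
        have := j.isLt
        omega
      have hprod1 : ∀ {α : Type} [CommMonoid α] (g : Fin (len i) → α),
          ∏ j, g j = g ⟨0, hlen i⟩ := by
        intro α _ g
        apply Finset.prod_eq_single_of_mem _ (Finset.mem_univ _)
        intro b _ hb
        exact absurd (huniq b) hb
      rw [hprod1, hfixout i hiS _, Matrix.charmatrix_apply_eq]
      have hX : (X : ℝ[X]) ^ (len i) = X := by rw [hl1, pow_one]
      have hPi : P i = J (cyc i ⟨0, hlen i⟩) (cyc i ⟨0, hlen i⟩) := by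
        rw [hPdef]
        show (∏ j : Fin (len i), J (cyc i (sfin len hlen i j)) (cyc i j)) = _
        rw [hprod1]
        congr 1
        rw [huniq (sfin len hlen i ⟨0, hlen i⟩)]
      rw [hX, hPi]
    have hoff : ∀ x ∈ Finset.univ \ B,
        Matrix.charmatrix J (cperm len cyc hlen hinj hdisj S x) x = X := by
      intro x hx
      have hxB : ∀ i, x ∉ Set.range (cyc i) := by
        intro i hmem
        exact (Finset.mem_sdiff.mp hx).2 ((hmemB x).mpr ⟨i, hmem⟩)
      have hfix : cperm len cyc hlen hinj hdisj S x = x :=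
        cperm_fix' len cyc hlen hinj hdisj (fun i _ => hxB i)
      rw [hfix, Matrix.charmatrix_apply_eq,
        diag_zero_off len cyc hinj J hall hxB, map_zero, sub_zero]
    -- assemble the product
    rw [hsplit]
    rw [Finset.prod_congr rfl hoff, Finset.prod_const, hcardoff]
    rw [← Finset.prod_filter_mul_prod_filter_not Finset.univ (fun i : ι => 2 ≤ len i), ← hI2def]
    rw [← Finset.prod_sdiff hSsub]
    rw [Finset.prod_congr rfl hblockS, Finset.prod_congr rfl hblockNS,
      Finset.prod_congr rfl hblock1]
    -- now the sign
    have hsign : ((Equiv.Perm.sign (cperm len cyc hlen hinj hdisj S) : ℤ) : ℝ[X]) =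
        ∏ i ∈ S, (-1) ^ (len i + 1) := by
      rw [cperm_sign len cyc hlen hinj hdisj hS]
      push_cast
      rfl
    rw [zsmul_eq_mul, hsign]
    have hcomb : (∏ i ∈ S, ((-1 : ℝ[X]) ^ (len i + 1))) * (∏ i ∈ S, ((-1) ^ (len i) * C (P i)))
        = ∏ i ∈ S, -C (P i) := by
      rw [← Finset.prod_mul_distrib]
      refine Finset.prod_congr rfl fun i _ => ?_
      rw [← mul_assoc, ← pow_add]
      have h : len i + 1 + len i = 2 * len i + 1 := by omega
      rw [h, pow_succ, pow_mul, neg_one_sq, one_pow, one_mul, neg_one_mul]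
    rw [← hcomb]
    ring
  -- assemble the determinant
  rw [Matrix.charpoly, Matrix.det_apply]
  set G : Finset (Equiv.Perm n) := I2.powerset.image (cperm len cyc hlen hinj hdisj) with hGdef
  have hvanish : ∀ σ ∈ (Finset.univ : Finset (Equiv.Perm n)), σ ∉ G →
      (Equiv.Perm.sign σ • ∏ x, Matrix.charmatrix J (σ x) x) = (0 : ℝ[X]) := by
    intro σ _ hσG
    by_cases hgood : ∀ x, σ x ≠ x → J (σ x) x ≠ 0
    · exfalso
      obtain ⟨S, hS2, rfl⟩ := good_classify len cyc hlen hinj hdisj J harc hall σ hgood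
      exact hσG (Finset.mem_image.mpr ⟨S, Finset.mem_powerset.mpr
        (fun i hi => Finset.mem_filter.mpr ⟨Finset.mem_univ i, hS2 i hi⟩), rfl⟩)
    · push_neg at hgood
      obtain ⟨x, hx1, hx2⟩ := hgood
      have hzero : Matrix.charmatrix J (σ x) x = 0 := by
        rw [Matrix.charmatrix_apply_ne _ _ _ hx1, hx2, map_zero, neg_zero]
      have hz2 : ∏ x : n, Matrix.charmatrix J (σ x) x = 0 :=
        Finset.prod_eq_zero (Finset.mem_univ x) hzero
      rw [hz2, smul_zero]
  rw [← Finset.sum_subset (Finset.subset_univ G) hvanish]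
  rw [hGdef, Finset.sum_image (fun S hSm S' hSm' h => cperm_inj len cyc hlen hinj hdisj
      (fun i hi => (Finset.mem_filter.mp (Finset.mem_powerset.mp hSm hi)).2)
      (fun i hi => (Finset.mem_filter.mp (Finset.mem_powerset.mp hSm' hi)).2) h)]
  refine Eq.trans (Finset.sum_congr rfl hT) ?_
  rw [← Finset.sum_mul]
  rw [← Finset.prod_add (fun i => -C (P i)) (fun i => X ^ (len i)) I2]
  have hsub : ∀ i ∈ I2, -C (P i) + X ^ (len i) = X ^ (len i) - C (P i) := fun i _ => by ring
  rw [Finset.prod_congr rfl hsub]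
  have huniv : ∏ i : ι, (X ^ (len i) - C (P i)) =
      (∏ i ∈ I2, (X ^ (len i) - C (P i))) *
        ∏ i ∈ Finset.univ.filter (fun i : ι => ¬ 2 ≤ len i), (X ^ (len i) - C (P i)) := by
    rw [hI2def, Finset.prod_filter_mul_prod_filter_not]
  rw [huniv]
  ring

end Class

end DisjCyc

/-- a square matrix whose directed support graph has all its directed
cycles vertex-disjoint has characteristic polynomial
`λ^m ∏_i (λ^{|ω_i|} − P_i)`, where `P_i` is the product of the entries along the cycle
`ω_i`; hence if `|P_i| ≤ 1` for all `i`, the spectral radius is at most `1`. -/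
theorem disjoint_cycles_charpoly_and_spectral_radius
    {n : Type*} [Fintype n] [DecidableEq n]
    (J : Matrix n n ℝ)
    {ι : Type*} [Fintype ι]
    (len : ι → ℕ) (hlen : ∀ i, 0 < len i)
    (cyc : (i : ι) → Fin (len i) → n)
    (hinj : ∀ i, Function.Injective (cyc i))
    (harc : ∀ (i : ι) (j : Fin (len i)),
      J (cyc i ⟨((j : ℕ) + 1) % len i, Nat.mod_lt _ (hlen i)⟩) (cyc i j) ≠ 0)
    (hdisj : ∀ i i', i ≠ i' → Disjoint (Set.range (cyc i)) (Set.range (cyc i')))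
    (hall : ∀ (m : ℕ) (hm : 0 < m) (d : Fin m → n),
      Function.Injective d →
      (∀ j : Fin m, J (d ⟨((j : ℕ) + 1) % m, Nat.mod_lt _ hm⟩) (d j) ≠ 0) →
      ∃ i, Set.range d = Set.range (cyc i)) :
    J.charpoly =
      X ^ (Fintype.card n - ∑ i, len i) *
        ∏ i, (X ^ (len i) -
          C (∏ j : Fin (len i),
              J (cyc i ⟨((j : ℕ) + 1) % len i, Nat.mod_lt _ (hlen i)⟩) (cyc i j))) ∧
    ((∀ i, |∏ j : Fin (len i),
        J (cyc i ⟨((j : ℕ) + 1) % len i, Nat.mod_lt _ (hlen i)⟩) (cyc i j)| ≤ 1) →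
      ∀ μ ∈ spectrum ℂ (J.map (fun x : ℝ => (x : ℂ))), ‖μ‖ ≤ 1) := by
  have h1 : J.charpoly = X ^ (Fintype.card n - ∑ i, len i) *
      ∏ i, (X ^ (len i) -
        C (∏ j : Fin (len i), J (cyc i (DisjCyc.sfin len hlen i j)) (cyc i j))) :=
    DisjCyc.charpoly_eq len cyc hlen hinj hdisj J harc hall
  refine ⟨h1, ?_⟩
  intro habs μ hμ
  set m := Fintype.card n - ∑ i, len i with hm
  -- eigenvalues are roots of the (complexified) characteristic polynomial
  have hev : ((J.map (fun x : ℝ => (x : ℂ))).charpoly).eval μ = 0 := by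
    rw [spectrum.mem_iff, Matrix.isUnit_iff_isUnit_det] at hμ
    have hdet : (algebraMap ℂ (Matrix n n ℂ) μ - J.map (fun x : ℝ => (x : ℂ))).det = 0 := by
      by_contra h
      exact hμ (isUnit_iff_ne_zero.mpr h)
    have hmap : (Matrix.charmatrix (J.map (fun x : ℝ => (x : ℂ)))).map (eval μ) =
        algebraMap ℂ (Matrix n n ℂ) μ - J.map (fun x : ℝ => (x : ℂ)) := by
      ext a b
      by_cases hab : a = b
      · subst hab
        simp [Matrix.charmatrix_apply_eq, Matrix.algebraMap_matrix_apply]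
      · simp [Matrix.charmatrix_apply_ne _ _ _ hab, Matrix.algebraMap_matrix_apply, hab]
    have hdet2 := RingHom.map_det (Polynomial.evalRingHom μ)
      (Matrix.charmatrix (J.map (fun x : ℝ => (x : ℂ))))
    rw [Matrix.charpoly]
    show (Polynomial.evalRingHom μ) (Matrix.charmatrix (J.map (fun x : ℝ => (x : ℂ)))).det = 0
    rw [hdet2, RingHom.mapMatrix_apply, Polynomial.coe_evalRingHom, hmap]
    exact hdet
  have h2 : (J.map (fun x : ℝ => (x : ℂ))).charpoly = J.charpoly.map Complex.ofRealHom :=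
    Matrix.charpoly_map J Complex.ofRealHom
  rw [h2, h1] at hev
  simp only [Polynomial.map_mul, Polynomial.map_pow, Polynomial.map_X, Polynomial.map_prod,
    Polynomial.map_sub, Polynomial.map_C, eval_mul, eval_pow, eval_X, Polynomial.eval_prod,
    eval_sub, eval_C] at hev
  rcases mul_eq_zero.mp hev with h0 | hprod
  · have hμ0 : μ = 0 := (pow_eq_zero_iff'.mp h0).1
    rw [hμ0]
    simp
  · obtain ⟨i, -, hi⟩ := Finset.prod_eq_zero_iff.mp hprod
    have heq : μ ^ (len i) = (Complex.ofRealHom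
        (∏ j : Fin (len i), J (cyc i (DisjCyc.sfin len hlen i j)) (cyc i j))) :=
      sub_eq_zero.mp hi
    have habs2 : ‖μ‖ ^ (len i) ≤ 1 := by
      rw [← norm_pow, heq]
      show ‖((∏ j : Fin (len i),
        J (cyc i (DisjCyc.sfin len hlen i j)) (cyc i j) : ℝ) : ℂ)‖ ≤ 1
      rw [Complex.norm_real, Real.norm_eq_abs]
      exact habs i
    by_contra hgt
    push_neg at hgt
    have h3 : 1 < ‖μ‖ ^ (len i) := one_lt_pow₀ hgt (hlen i).ne'
    linarith
end
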